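/- Let f, g : ℝ^N → ℝ be quasiconvex functions such that f = g almost everywhere with respect to Lebesgue measure, and suppose that their common essential infimum over ℝ^N is a (finite) real number m. Then the functions max{f, m} and max{g, m} have the same points of continuity and the same points of approximate continuity, and at any such common point they take a common value. -/

import Mathlib

open MeasureTheory Metric Filter

/-- `f` is approximately continuous at `x` if for every `ε > 0` the set
`{y | |f y - f x| < ε}` has Lebesgue density `1` at `x`. -/
def ApproxContinuousAt {N : ℕ} (f : EuclideanSpace ℝ (Fin N) → ℝ)
    (x : EuclideanSpace ℝ (Fin N)) : Prop :=
  ∀ ε : ℝ, 0 < ε →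
    Tendsto (fun r : ℝ => volume ({y | |f y - f x| < ε} ∩ ball x r) / volume (ball x r))
      (nhdsWithin 0 (Set.Ioi 0)) (nhds 1)

/-!
A convex set `T` in `ℝ^N` is determined by its measure-theoretic trace. An open set contained in `T`
up to a null set lies in `T`, and if `μ T ≠ 0`, an open set meeting `T` in a null set misses `T`
(both because `∂T` is null and `T` has interior). If `x ∉ T`, the point reflection through `x`
maps `T ∩ B(x, r)` into `B(x, r) \ T`, so `T` has density at most `1/2` at `x`; if `x ∈ T`,
the homotheties centred at `x` show that the density ratio of `T` at `x` is antitone in `r`,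
hence bounded below when `μ T ≠ 0`.

Apply this to the convex sets `{g < β}`, which have positive measure for every `β > m`: the
(approximate) limit of `max f m` at `x` only sees `g` up to a null set, yet it determines on which
side of each such `{g < β}` the point `x`, and for continuity a whole neighbourhood of `x`, lies.
-/

open scoped ENNReal Topology

section Density

variable {X : Type*} [PseudoMetricSpace X] [MeasurableSpace X] {μ : Measure X} {s t : Set X}
  {x : X} {l : Filter ℝ}

-- `ApproxContinuousAt f x` says, definitionally, that
-- `densityRatio volume {y | |f y - f x| < ε} x r → 1` as `r → 0+`.
noncomputable def densityRatio (μ : Measure X) (s : Set X) (x : X) (r : ℝ) : ℝ≥0∞ :=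
  μ (s ∩ ball x r) / μ (ball x r)

theorem densityRatio_le_one (r : ℝ) : densityRatio μ s x r ≤ 1 :=
  ENNReal.div_le_of_le_mul (by rw [one_mul]; exact measure_mono Set.inter_subset_right)

theorem densityRatio_mono_ae (h : s ≤ᵐ[μ] t) (r : ℝ) :
    densityRatio μ s x r ≤ densityRatio μ t x r :=
  ENNReal.div_le_div_right (measure_mono_ae (h.inter (EventuallyLE.refl _ _))) _

theorem tendsto_densityRatio_one_of_ae_le (h : s ≤ᵐ[μ] t)
    (hs : Tendsto (densityRatio μ s x) l (𝓝 1)) : Tendsto (densityRatio μ t x) l (𝓝 1) :=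
  tendsto_of_tendsto_of_tendsto_of_le_of_le hs tendsto_const_nhds (densityRatio_mono_ae h)
    densityRatio_le_one

theorem densityRatio_add_densityRatio_le_one (ht : NullMeasurableSet t μ) (hst : μ (s ∩ t) = 0)
    (r : ℝ) : densityRatio μ s x r + densityRatio μ t x r ≤ 1 := by
  have hs : μ (s ∩ ball x r) ≤ μ (ball x r \ t) := measure_mono_ae <| by
    filter_upwards [measure_eq_zero_iff_ae_notMem.1 hst] with y hy ⟨hys, hyB⟩
    exact ⟨hyB, fun hyt => hy ⟨hys, hyt⟩⟩
  rw [densityRatio, densityRatio, ENNReal.div_add_div_same]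
  refine ENNReal.div_le_of_le_mul ?_
  rw [one_mul, ← measure_inter_add_sdiff₀ (ball x r) ht, add_comm, Set.inter_comm t]
  exact add_le_add_right hs _

theorem tendsto_densityRatio_zero_of_measure_inter_eq_zero (ht : NullMeasurableSet t μ)
    (hst : μ (s ∩ t) = 0) (hs : Tendsto (densityRatio μ s x) l (𝓝 1)) :
    Tendsto (densityRatio μ t x) l (𝓝 0) := by
  have hcompl : Tendsto (fun r => 1 - densityRatio μ s x r) l (𝓝 0) := by
    have := ((ENNReal.continuous_sub_left ENNReal.one_ne_top).tendsto 1).comp hs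
    rwa [tsub_self] at this
  refine tendsto_of_tendsto_of_tendsto_of_le_of_le tendsto_const_nhds hcompl (fun _ => zero_le)
    fun r => ENNReal.le_sub_of_add_le_left ?_ (densityRatio_add_densityRatio_le_one ht hst r)
  exact ne_top_of_le_ne_top ENNReal.one_ne_top (densityRatio_le_one r)

end Density

section AddHaar

variable {E : Type*} [NormedAddCommGroup E] [NormedSpace ℝ E] [MeasurableSpace E] [BorelSpace E]
  [FiniteDimensional ℝ E] {μ : Measure E} [μ.IsAddHaarMeasure] {T U : Set E} {x : E}

namespace Convex

theorem interior_nonempty_of_measure_ne_zero (hT : Convex ℝ T) (h : μ T ≠ 0) :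
    (interior T).Nonempty := by
  by_contra hint
  rw [Set.not_nonempty_iff_eq_empty] at hint
  refine h (measure_mono_null ?_ (hT.addHaar_frontier μ))
  rw [frontier, hint, Set.sdiff_empty]
  exact subset_closure

theorem subset_of_isOpen_of_ae_le (hT : Convex ℝ T) (hU : IsOpen U) (h : U ≤ᵐ[μ] T) :
    U ⊆ T := by
  rcases U.eq_empty_or_nonempty with rfl | hne
  · exact Set.empty_subset T
  have hUcl : U ⊆ closure T := by
    refine Set.sdiff_eq_empty.1 <| ((hU.sdiff isClosed_closure).measure_eq_zero_iff μ).1 ?_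
    exact measure_mono_null (Set.sdiff_subset_sdiff_right subset_closure) (ae_le_set.1 h)
  have hint : (interior T).Nonempty := hT.interior_nonempty_of_measure_ne_zero
    ((hU.measure_pos μ hne).trans_le (measure_mono_ae h)).ne'
  calc U ⊆ interior (closure T) := interior_maximal hUcl hU
    _ = interior T := hT.interior_closure_eq_interior_of_nonempty_interior hint
    _ ⊆ T := interior_subset

theorem disjoint_of_isOpen_of_measure_inter_eq_zero (hT : Convex ℝ T) (hT0 : μ T ≠ 0)
    (hU : IsOpen U) (h : μ (U ∩ T) = 0) : Disjoint U T := by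
  have hint : Disjoint U (interior T) := by
    rw [Set.disjoint_iff_inter_eq_empty, ← (hU.inter isOpen_interior).measure_eq_zero_iff μ]
    exact measure_mono_null (Set.inter_subset_inter_right _ interior_subset) h
  have hcl := hint.closure_right hU
  rw [hT.closure_interior_eq_closure_of_nonempty_interior
    (hT.interior_nonempty_of_measure_ne_zero hT0)] at hcl
  exact hcl.mono_right subset_closure

theorem mem_nhds_of_mem_nhds_inf_ae (hT : Convex ℝ T) (h : T ∈ 𝓝 x ⊓ ae μ) : T ∈ 𝓝 x := by
  obtain ⟨V, hV, Z, hZ, hVZ⟩ := mem_inf_iff_superset.1 h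
  obtain ⟨W, hWV, hW, hxW⟩ := _root_.mem_nhds_iff.1 hV
  refine mem_of_superset (hW.mem_nhds hxW) (hT.subset_of_isOpen_of_ae_le (μ := μ) hW ?_)
  filter_upwards [hZ] with y hyZ hyW using hVZ ⟨hWV hyW, hyZ⟩

theorem compl_mem_nhds_of_compl_mem_nhds_inf_ae (hT : Convex ℝ T) (hT0 : μ T ≠ 0)
    (h : Tᶜ ∈ 𝓝 x ⊓ ae μ) : Tᶜ ∈ 𝓝 x := by
  obtain ⟨V, hV, Z, hZ, hVZ⟩ := mem_inf_iff_superset.1 h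
  obtain ⟨W, hWV, hW, hxW⟩ := _root_.mem_nhds_iff.1 hV
  refine mem_of_superset (hW.mem_nhds hxW) (Disjoint.subset_compl_right ?_)
  refine hT.disjoint_of_isOpen_of_measure_inter_eq_zero hT0 hW (measure_mono_null ?_ hZ)
  exact fun y ⟨hyW, hyT⟩ hyZ => hVZ ⟨hWV hyW, hyZ⟩ hyT

theorem densityRatio_antitoneOn (hT : Convex ℝ T) (hx : x ∈ T) :
    AntitoneOn (densityRatio μ T x) (Set.Ioi 0) := by
  intro r hr d hd hrd
  set t := r / d
  have ht : 0 < t := div_pos hr hd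
  have hrt : r = t * d := (div_mul_cancel₀ r hd.ne').symm
  have himage : AffineMap.homothety x t '' (T ∩ ball x d) ⊆ T ∩ ball x r := by
    rintro _ ⟨y, ⟨hyT, hyd⟩, rfl⟩
    refine ⟨?_, ?_⟩
    · rw [AffineMap.homothety_eq_lineMap]
      exact hT.lineMap_mem hx hyT ⟨ht.le, div_le_one_of_le₀ hrd hd.le⟩
    · rw [mem_ball, dist_homothety_center, Real.norm_of_nonneg ht.le, dist_comm, hrt]
      exact mul_lt_mul_of_pos_left hyd ht
  set c := ENNReal.ofReal (t ^ Module.finrank ℝ E)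
  have hc : c ≠ 0 := by positivity
  have hball : μ (ball x r) = c * μ (ball x d) := by
    rw [hrt, Measure.addHaar_ball_mul_of_pos μ x ht, ← Measure.addHaar_ball_center μ x]
  have himage_measure : μ (AffineMap.homothety x t '' (T ∩ ball x d)) = c * μ (T ∩ ball x d) := by
    rw [Measure.addHaar_image_homothety, abs_of_pos (pow_pos ht _)]
  calc densityRatio μ T x d = c * μ (T ∩ ball x d) / (c * μ (ball x d)) :=
        (ENNReal.mul_div_mul_left _ _ hc ENNReal.ofReal_ne_top).symm
    _ ≤ densityRatio μ T x r := by
        rw [densityRatio, hball, ← himage_measure]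
        exact ENNReal.div_le_div_right (measure_mono himage) _

theorem not_tendsto_densityRatio_zero (hT : Convex ℝ T) (hT0 : μ T ≠ 0) (hx : x ∈ T) :
    ¬Tendsto (densityRatio μ T x) (𝓝[>] 0) (𝓝 0) := by
  intro h
  obtain ⟨n, hn⟩ : ∃ n : ℕ, μ (T ∩ ball x (n + 1)) ≠ 0 := by
    by_contra! H
    apply hT0
    rw [← Set.inter_univ T, ← iUnion_ball_nat_succ x, Set.inter_iUnion]
    exact measure_iUnion_null H
  have hd : (0 : ℝ) < n + 1 := n.cast_add_one_pos
  have hpos : 0 < densityRatio μ T x (n + 1) := ENNReal.div_pos hn measure_ball_lt_top.ne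
  obtain ⟨r, hr_lt, hr⟩ := ((h.eventually (gt_mem_nhds hpos)).and (Ioc_mem_nhdsGT hd)).exists
  exact hr_lt.not_ge (hT.densityRatio_antitoneOn hx hr.1 hd hr.2)

theorem two_mul_measure_inter_ball_le (hT : Convex ℝ T) (hx : x ∉ T) (r : ℝ) :
    2 * μ (T ∩ ball x r) ≤ μ (ball x r) := by
  set H := AffineMap.homothety x (-1 : ℝ)
  have hdisj : Disjoint (T ∩ ball x r) (H '' (T ∩ ball x r)) := by
    rw [Set.disjoint_right]
    rintro _ ⟨y, ⟨hyT, -⟩, rfl⟩ ⟨hHyT, -⟩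
    refine hx ?_
    convert hT hyT hHyT (a := 1 / 2) (b := 1 / 2) (by norm_num) (by norm_num) (by norm_num) using 1
    simp only [H, AffineMap.homothety_apply, vsub_eq_sub, vadd_eq_add]
    module
  have hsub : H '' (T ∩ ball x r) ⊆ ball x r := by
    rintro _ ⟨y, ⟨-, hy⟩, rfl⟩
    rwa [mem_ball, dist_homothety_center, norm_neg, norm_one, one_mul, dist_comm]
  calc 2 * μ (T ∩ ball x r) = μ (T ∩ ball x r) + μ (H '' (T ∩ ball x r)) := by
        simp [H, two_mul]
    _ = μ (T ∩ ball x r ∪ H '' (T ∩ ball x r)) :=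
        (measure_union₀' ((hT.inter (convex_ball x r)).nullMeasurableSet μ)
          hdisj.aedisjoint).symm
    _ ≤ μ (ball x r) := measure_mono (Set.union_subset Set.inter_subset_right hsub)

theorem mem_of_tendsto_densityRatio_one (hT : Convex ℝ T)
    (h : Tendsto (densityRatio μ T x) (𝓝[>] 0) (𝓝 1)) : x ∈ T := by
  by_contra hx
  have hhalf : ∀ r, densityRatio μ T x r ≤ 2⁻¹ := fun r => by
    refine ENNReal.div_le_of_le_mul ?_
    rw [← ENNReal.div_eq_inv_mul, ENNReal.le_div_iff_mul_le (by norm_num) (by norm_num), mul_comm]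
    exact hT.two_mul_measure_inter_ball_le hx r
  exact absurd (le_of_tendsto' h hhalf) (by norm_num)

end Convex

theorem continuousAt_max_of_ae_eq {f g : E → ℝ} {m : ℝ} (hg : ∀ β, Convex ℝ {y | g y < β})
    (hgm : ∀ β, m < β → μ {y | g y < β} ≠ 0) (hfg : f =ᵐ[μ] g)
    (hf : ContinuousAt (fun y => max (f y) m) x) :
    ContinuousAt (fun y => max (g y) m) x ∧ max (g x) m = max (f x) m := by
  set a := max (f x) m
  have hf_ae : Tendsto (fun y => max (f y) m) (𝓝 x ⊓ ae μ) (𝓝 a) := hf.mono_left inf_le_left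
  have hfg_ae : f =ᶠ[𝓝 x ⊓ ae μ] g := hfg.filter_mono inf_le_right
  have hlim : Tendsto (fun y => max (g y) m) (𝓝 x) (𝓝 a) := by
    refine tendsto_order.2 ⟨fun β hβ => ?_, fun β hβ => ?_⟩
    · rcases lt_or_ge β m with hβm | hmβ
      · exact Eventually.of_forall fun y => hβm.trans_le (le_max_right _ _)
      obtain ⟨γ, hβγ, hγa⟩ := exists_between hβ
      have hmγ : m < γ := hmβ.trans_lt hβγ
      have hγ : {y | g y < γ}ᶜ ∈ 𝓝 x ⊓ ae μ := by
        filter_upwards [(tendsto_order.1 hf_ae).1 γ hγa, hfg_ae] with y hy hfy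
        exact not_lt.2 (hfy ▸ ((lt_max_iff.1 hy).resolve_right hmγ.not_gt).le)
      filter_upwards [(hg γ).compl_mem_nhds_of_compl_mem_nhds_inf_ae (hgm γ hmγ) hγ] with y
        (hy : ¬g y < γ)
      exact hβγ.trans_le ((not_lt.1 hy).trans (le_max_left _ _))
    · have hβ' : {y | g y < β} ∈ 𝓝 x ⊓ ae μ := by
        filter_upwards [(tendsto_order.1 hf_ae).2 β hβ, hfg_ae] with y hy hfy
        exact hfy ▸ (le_max_left _ _).trans_lt hy
      filter_upwards [(hg β).mem_nhds_of_mem_nhds_inf_ae hβ'] with y hy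
      exact max_lt hy ((le_max_right _ _).trans_lt hβ)
  have hval : max (g x) m = a := eq_of_tendsto_nhds (f := fun y => max (g y) m) hlim
  exact ⟨by rw [ContinuousAt, hval]; exact hlim, hval⟩

end AddHaar

theorem measure_setOf_lt_ne_zero_of_essInf_le {α : Type*} [MeasurableSpace α] {μ : Measure α}
    {f : α → ℝ} {m β : ℝ} (hm : essInf (fun y => (f y : EReal)) μ ≤ m) (hβ : m < β) :
    μ {y | f y < β} ≠ 0 := by
  intro h0
  have hβf : (β : EReal) ≤ essInf (fun y => (f y : EReal)) μ := le_essInf_of_ae_le _ <| by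
    filter_upwards [measure_eq_zero_iff_ae_notMem.1 h0] with y hy
    exact EReal.coe_le_coe_iff.2 (not_lt.1 hy)
  exact hβ.not_ge (EReal.coe_le_coe_iff.1 (hβf.trans hm))

theorem approxContinuousAt_max_of_ae_eq {N : ℕ} {f g : EuclideanSpace ℝ (Fin N) → ℝ} {m : ℝ}
    {x : EuclideanSpace ℝ (Fin N)} (hg : ∀ β, Convex ℝ {y | g y < β})
    (hgm : ∀ β, m < β → volume {y | g y < β} ≠ 0) (hfg : f =ᵐ[volume] g)
    (hf : ApproxContinuousAt (fun y => max (f y) m) x) :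
    ApproxContinuousAt (fun y => max (g y) m) x ∧ max (g x) m = max (f x) m := by
  set a := max (f x) m
  have hlt : ∀ β, a < β → g x < β := fun β hβ => by
    refine (hg β).mem_of_tendsto_densityRatio_one
      (tendsto_densityRatio_one_of_ae_le ?_ (hf (β - a) (sub_pos.2 hβ)))
    filter_upwards [hfg] with y hfy (hy : |max (f y) m - a| < β - a)
    show g y < β
    rw [← hfy]
    exact (le_max_left _ _).trans_lt (by linarith [(abs_lt.1 hy).2])
  have hge : ∀ β, β < a → m < β → β ≤ g x := fun β hβ hmβ => by
    by_contra! hgx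
    refine (hg β).not_tendsto_densityRatio_zero (hgm β hmβ) hgx
      (tendsto_densityRatio_zero_of_measure_inter_eq_zero ((hg β).nullMeasurableSet volume) ?_
        (hf (a - β) (sub_pos.2 hβ)))
    rw [measure_eq_zero_iff_ae_notMem]
    filter_upwards [hfg] with y hfy ⟨(hy : |max (f y) m - a| < a - β), (hgy : g y < β)⟩
    rw [← hfy] at hgy
    linarith [(abs_lt.1 hy).1, max_lt hgy hmβ]
  have hval : max (g x) m = a := by
    refine le_antisymm (max_le (le_of_forall_gt hlt) (le_max_right _ _)) (le_of_not_gt fun h => ?_)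
    obtain ⟨β, hgβ, hβa⟩ := exists_between h
    exact (hge β hβa ((le_max_right _ _).trans_lt hgβ)).not_gt ((le_max_left _ _).trans_lt hgβ)
  refine ⟨fun ε hε => tendsto_densityRatio_one_of_ae_le ?_ (hf ε hε), hval⟩
  filter_upwards [hfg] with y hfy hy
  show |max (g y) m - max (g x) m| < ε
  rwa [hval, ← hfy]

theorem stmt_10 {N : ℕ} (f g : EuclideanSpace ℝ (Fin N) → ℝ) (m : ℝ)
    (hf : ∀ α : ℝ, Convex ℝ {x | f x < α}) (hg : ∀ α : ℝ, Convex ℝ {x | g x < α})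
    (hfg : f =ᵐ[volume] g)
    (hm : essInf (fun x => (f x : EReal)) volume = (m : EReal)) :
    ∀ x : EuclideanSpace ℝ (Fin N),
      (ContinuousAt (fun y => max (f y) m) x ↔ ContinuousAt (fun y => max (g y) m) x) ∧
      (ApproxContinuousAt (fun y => max (f y) m) x ↔
        ApproxContinuousAt (fun y => max (g y) m) x) ∧
      (ContinuousAt (fun y => max (f y) m) x → ContinuousAt (fun y => max (g y) m) x →
        max (f x) m = max (g x) m) ∧
      (ApproxContinuousAt (fun y => max (f y) m) x → ApproxContinuousAt (fun y => max (g y) m) x →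
        max (f x) m = max (g x) m) := by
  intro x
  have hfm : ∀ β, m < β → volume {y | f y < β} ≠ 0 := fun β =>
    measure_setOf_lt_ne_zero_of_essInf_le hm.le
  have hgm : ∀ β, m < β → volume {y | g y < β} ≠ 0 := fun β =>
    measure_setOf_lt_ne_zero_of_essInf_le <| by
      rw [← hm]; exact (essInf_congr_ae (hfg.fun_comp ((↑) : ℝ → EReal))).ge
  exact ⟨⟨fun h => (continuousAt_max_of_ae_eq hg hgm hfg h).1,
      fun h => (continuousAt_max_of_ae_eq hf hfm hfg.symm h).1⟩,
    ⟨fun h => (approxContinuousAt_max_of_ae_eq hg hgm hfg h).1,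
      fun h => (approxContinuousAt_max_of_ae_eq hf hfm hfg.symm h).1⟩,
    fun h _ => (continuousAt_max_of_ae_eq hg hgm hfg h).2.symm,
    fun h _ => (approxContinuousAt_max_of_ae_eq hg hgm hfg h).2.symm⟩
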